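/- arXiv:1303.4777 — 3 statements merged into one kernel-verified Lean document; each statement's English description precedes it below -/
import Mathlib

section
/- Let r ≥ 0 and k ≥ 1, and let R = ℤ[ℤ^r × ℤ/kℤ] be the integral group algebra, with u ∈ R the canonical invertible element corresponding to the group element (0, 1̄). The minimal prime ideals of R are exactly the principal ideals (Φ_d(u)) generated by the d-th cyclotomic polynomial evaluated at u, for the positive divisors d of k; moreover, for distinct divisors d these ideals are pairwise distinct. -/
/-!
Currying identifies `ℤ[ℤ^r × ℤ/k]` with `B[ℤ^r]`, where `B = ℤ[ℤ/k]`, and `u` with the generator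
`v` of `B`. If `p ∣ X^k - 1`, then `v ↦ root p` defines `B → ℤ[X]/(p)`, whose kernel is `(p(v))`
because `ℤ[X] → B, X ↦ v` is onto. Applying it coefficientwise gives `R → (ℤ[X]/(p))[ℤ^r]` with
kernel `(p(u))`; the target is a domain when `p` is prime, as `ℤ^r` is torsion-free. For `p = Φ_d`
this makes every `(Φ_d(u))` prime, with `Φ_e(u) ∈ (Φ_d(u))` only if `Φ_d ∣ Φ_e`, i.e. `d = e`;
and `∏_{d ∣ k} Φ_d(u) = u^k - 1 = 0` puts one of them inside every prime.
-/

open Polynomial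

def ZMod.powMonoidHom {M : Type*} [Monoid M] {k : ℕ} [NeZero k] (t : M) (ht : t ^ k = 1) :
    Multiplicative (ZMod k) →* M where
  toFun n := t ^ (Multiplicative.toAdd n).val
  map_one' := by simp
  map_mul' a b := by rw [toAdd_mul, ZMod.val_add, ← pow_eq_pow_mod _ ht, pow_add]

theorem ZMod.powMonoidHom_ofAdd_one {M : Type*} [Monoid M] {k : ℕ} [NeZero k] (t : M)
    (ht : t ^ k = 1) : ZMod.powMonoidHom t ht (Multiplicative.ofAdd 1) = t := by
  simp [ZMod.powMonoidHom, ZMod.val_one_eq_one_mod, ← pow_eq_pow_mod _ ht]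

theorem AdjoinRoot.root_pow_eq_one {A : Type*} [CommRing A] {k : ℕ} {p : A[X]}
    (hp : p ∣ X ^ k - 1) : root p ^ k = 1 := by
  rwa [← sub_eq_zero, ← mk_X, ← map_pow, ← map_one (mk p), ← map_sub, mk_eq_zero]

theorem Polynomial.cyclotomic_dvd_cyclotomic_iff {d e : ℕ} (hd : 0 < d) (he : 0 < e) :
    cyclotomic d ℤ ∣ cyclotomic e ℤ ↔ d = e := by
  refine ⟨fun h => cyclotomic_injective (R := ℤ) ?_, fun h => h ▸ dvd_rfl⟩
  exact eq_of_monic_of_associated (cyclotomic.monic d ℤ) (cyclotomic.monic e ℤ)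
    ((cyclotomic.irreducible hd).associated_of_dvd (cyclotomic.irreducible he) h)

theorem minimalPrimes_eq_of_prod_eq_zero {R ι : Type*} [CommSemiring R] {s : Finset ι}
    {x : ι → R} (hprime : ∀ i ∈ s, (Ideal.span {x i}).IsPrime)
    (hmem : ∀ i ∈ s, ∀ j ∈ s, x j ∈ Ideal.span {x i} → i = j) (hprod : ∏ i ∈ s, x i = 0) :
    minimalPrimes R = (fun i => Ideal.span {x i}) '' s := by
  have hcover (Q : Ideal R) (hQ : Q.IsPrime) : ∃ i ∈ s, Ideal.span {x i} ≤ Q := by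
    obtain ⟨i, hi, hxi⟩ := hQ.prod_mem_iff.1 (hprod ▸ Q.zero_mem)
    exact ⟨i, hi, (Ideal.span_singleton_le_iff_mem Q).2 hxi⟩
  ext I
  rw [minimalPrimes_eq_minimals, Set.mem_ofPred_eq]
  constructor
  · intro hI
    obtain ⟨i, hi, hle⟩ := hcover I hI.prop
    exact ⟨i, hi, le_antisymm hle (hI.le_of_le (hprime i hi) hle)⟩
  · rintro ⟨i, hi, rfl⟩
    refine ⟨hprime i hi, fun Q hQ hQi => ?_⟩
    obtain ⟨j, hj, hjQ⟩ := hcover Q hQ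
    obtain rfl := hmem i hi j hj (hQi (hjQ (Ideal.mem_span_singleton_self _)))
    exact hjQ

namespace AddMonoidAlgebra

variable {A G : Type*} [CommRing A] [AddCommMonoid G]

theorem ker_mapRingHom {S : Type*} [CommRing S] (f : A →+* S) :
    RingHom.ker (mapRingHom G f) = (RingHom.ker f).map (algebraMap A (AddMonoidAlgebra A G)) := by
  refine le_antisymm (fun x hx => ?_) (Ideal.map_le_iff_le_comap.2 fun a ha => ?_)
  · have hcoeff (g : G) : x.coeff g ∈ RingHom.ker f := by
      rw [RingHom.mem_ker, ← coeff_mapRingHom, RingHom.mem_ker.1 hx, coeff_zero]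
      rfl
    rw [← sum_coeff_single x]
    refine Ideal.sum_mem _ fun g _ => ?_
    rw [← mul_one (x.coeff g), ← smul_eq_mul, ← smul_single, Algebra.smul_def]
    exact Ideal.mul_mem_right _ _ (Ideal.mem_map_of_mem _ (hcoeff g))
  · simp [coe_algebraMap, RingHom.mem_ker.1 ha]

theorem curryAlgEquiv_aeval {k : ℕ} (q : A[X]) :
    curryAlgEquiv A (aeval (single ((0 : G), (1 : ZMod k)) (1 : A)) q) =
      algebraMap _ (AddMonoidAlgebra (AddMonoidAlgebra A (ZMod k)) G)
        (aeval (single (1 : ZMod k) (1 : A)) q) := by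
  rw [← aeval_algHom_apply, curryAlgEquiv_single, ← aeval_algebraMap_apply]
  rfl

variable {k : ℕ} [NeZero k]

theorem aeval_single_one_surjective :
    Function.Surjective (aeval (R := A) (single (1 : ZMod k) (1 : A))) := by
  intro x
  induction x using induction_linear with
  | zero => exact ⟨0, map_zero _⟩
  | add x y hx hy =>
    obtain ⟨p, rfl⟩ := hx
    obtain ⟨q, rfl⟩ := hy
    exact ⟨p + q, map_add _ _ _⟩
  | single n c =>
    refine ⟨C c * X ^ n.val, ?_⟩
    rw [map_mul, aeval_C, aeval_X_pow, single_pow, one_pow, nsmul_one, ZMod.natCast_zmod_val,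
      coe_algebraMap, Function.comp_apply, Algebra.algebraMap_self_apply, single_mul_single,
      zero_add, mul_one]

noncomputable def toAdjoinRoot (p : A[X]) (hp : p ∣ X ^ k - 1) :
    AddMonoidAlgebra A (ZMod k) →ₐ[A] AdjoinRoot p :=
  lift A _ _ (ZMod.powMonoidHom _ (AdjoinRoot.root_pow_eq_one hp))

theorem toAdjoinRoot_aeval {p : A[X]} (hp : p ∣ X ^ k - 1) (q : A[X]) :
    toAdjoinRoot p hp (aeval (single (1 : ZMod k) (1 : A)) q) = AdjoinRoot.mk p q := by
  rw [← aeval_algHom_apply, toAdjoinRoot, lift_single, ZMod.powMonoidHom_ofAdd_one, one_smul,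
    AdjoinRoot.aeval_eq]

theorem ker_toAdjoinRoot {p : A[X]} (hp : p ∣ X ^ k - 1) :
    RingHom.ker (toAdjoinRoot p hp) = Ideal.span {aeval (single (1 : ZMod k) (1 : A)) p} := by
  ext x
  obtain ⟨q, rfl⟩ := aeval_single_one_surjective x
  rw [RingHom.mem_ker, toAdjoinRoot_aeval, AdjoinRoot.mk_eq_zero, Ideal.mem_span_singleton]
  refine ⟨map_dvd _, fun ⟨y, hy⟩ => ?_⟩
  rw [← AdjoinRoot.mk_eq_zero, ← toAdjoinRoot_aeval hp, hy, map_mul, toAdjoinRoot_aeval hp,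
    AdjoinRoot.mk_self, zero_mul]

variable (G) in
noncomputable def prodToAdjoinRoot (p : A[X]) (hp : p ∣ X ^ k - 1) :
    AddMonoidAlgebra A (G × ZMod k) →+* AddMonoidAlgebra (AdjoinRoot p) G :=
  (mapRingHom G (toAdjoinRoot p hp).toRingHom).comp (curryAlgEquiv A).toRingHom

theorem prodToAdjoinRoot_aeval {p : A[X]} (hp : p ∣ X ^ k - 1) (q : A[X]) :
    prodToAdjoinRoot G p hp (aeval (single ((0 : G), (1 : ZMod k)) (1 : A)) q) =
      algebraMap _ _ (AdjoinRoot.mk p q) := by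
  rw [prodToAdjoinRoot, RingHom.comp_apply, RingEquiv.toRingHom_eq_coe, RingEquiv.coe_toRingHom,
    AlgEquiv.coe_ringEquiv, curryAlgEquiv_aeval, ← RingHom.comp_apply, mapRingHom_comp_algebraMap,
    RingHom.comp_apply, AlgHom.toRingHom_eq_coe, AlgHom.coe_toRingHom, toAdjoinRoot_aeval hp]

theorem ker_prodToAdjoinRoot {p : A[X]} (hp : p ∣ X ^ k - 1) :
    RingHom.ker (prodToAdjoinRoot G p hp) =
      Ideal.span {aeval (single ((0 : G), (1 : ZMod k)) (1 : A)) p} := by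
  rw [prodToAdjoinRoot, ← RingHom.comap_ker, ker_mapRingHom, AlgHom.toRingHom_eq_coe,
    RingHom.ker_coe_toRingHom, ker_toAdjoinRoot hp, Ideal.map_span, Set.image_singleton,
    ← curryAlgEquiv_aeval, ← Set.image_singleton, ← Ideal.map_span]
  exact Ideal.comap_map_of_bijective _ (curryAlgEquiv A).bijective

theorem isPrime_span_aeval [UniqueSums G] {p : A[X]} (hp : p ∣ X ^ k - 1) (hprime : Prime p) :
    (Ideal.span {aeval (single ((0 : G), (1 : ZMod k)) (1 : A)) p}).IsPrime := by
  have := AdjoinRoot.isDomain_of_prime hprime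
  rw [← ker_prodToAdjoinRoot hp]
  exact RingHom.ker_isPrime _

theorem aeval_mem_span_aeval_iff {p : A[X]} (hp : p ∣ X ^ k - 1) (q : A[X]) :
    aeval (single ((0 : G), (1 : ZMod k)) (1 : A)) q ∈
        Ideal.span {aeval (single ((0 : G), (1 : ZMod k)) (1 : A)) p} ↔ p ∣ q := by
  rw [← ker_prodToAdjoinRoot hp, RingHom.mem_ker, prodToAdjoinRoot_aeval, coe_algebraMap,
    Function.comp_apply, single_eq_zero, Algebra.algebraMap_self_apply, AdjoinRoot.mk_eq_zero]

theorem prod_aeval_cyclotomic_eq_zero :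
    ∏ d ∈ k.divisors, aeval (single ((0 : G), (1 : ZMod k)) (1 : A)) (cyclotomic d ℤ) = 0 := by
  rw [← map_prod, prod_cyclotomic_eq_X_pow_sub_one (Nat.pos_of_neZero k), map_sub, map_pow,
    aeval_X, map_one, single_pow, one_pow, Prod.smul_mk, smul_zero, nsmul_one, ZMod.natCast_self,
    Prod.mk_zero_zero, ← one_def, sub_self]

end AddMonoidAlgebra

/-- Let `R = ℤ[ℤ^r × ℤ/kℤ]` be the integral group algebra, with `u ∈ R` the
canonical invertible element corresponding to the group element `(0, 1̄)`.
The minimal prime ideals of `R` are exactly the principal ideals `(Φ_d(u))`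
generated by the `d`-th cyclotomic polynomial evaluated at `u`, for the
positive divisors `d` of `k`; moreover these ideals are pairwise distinct. -/
theorem minimalPrimes_groupAlgebra_eq_span_cyclotomic
    (r k : ℕ) (hk : 1 ≤ k) :
    let R := AddMonoidAlgebra ℤ ((Fin r →₀ ℤ) × ZMod k)
    let u : R := AddMonoidAlgebra.single ((0 : Fin r →₀ ℤ), (1 : ZMod k)) (1 : ℤ)
    minimalPrimes R =
      {I : Ideal R | ∃ d ∈ k.divisors,
        I = Ideal.span {Polynomial.aeval u (Polynomial.cyclotomic d ℤ)}} ∧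
    ∀ d ∈ k.divisors, ∀ e ∈ k.divisors, d ≠ e →
      (Ideal.span {Polynomial.aeval u (Polynomial.cyclotomic d ℤ)} : Ideal R) ≠
        Ideal.span {Polynomial.aeval u (Polynomial.cyclotomic e ℤ)} := by
  intro R u
  have : NeZero k := ⟨by omega⟩
  have hdvd (d : ℕ) (hd : d ∈ k.divisors) : cyclotomic d ℤ ∣ X ^ k - 1 :=
    prod_cyclotomic_eq_X_pow_sub_one hk ℤ ▸ Finset.dvd_prod_of_mem _ hd
  have hinj (d : ℕ) (hd : d ∈ k.divisors) (e : ℕ) (he : e ∈ k.divisors)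
      (h : aeval u (cyclotomic e ℤ) ∈ Ideal.span {aeval u (cyclotomic d ℤ)}) : d = e :=
    (cyclotomic_dvd_cyclotomic_iff (Nat.pos_of_mem_divisors hd) (Nat.pos_of_mem_divisors he)).1
      ((AddMonoidAlgebra.aeval_mem_span_aeval_iff (hdvd d hd) _).1 h)
  refine ⟨?_, fun d hd e he hde h => hde (hinj d hd e he (h ▸ Ideal.mem_span_singleton_self _))⟩
  rw [minimalPrimes_eq_of_prod_eq_zero (fun d hd => AddMonoidAlgebra.isPrime_span_aeval (hdvd d hd)
    (cyclotomic.irreducible (Nat.pos_of_mem_divisors hd)).prime) hinj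
    AddMonoidAlgebra.prod_aeval_cyclotomic_eq_zero]
  ext I
  simp [eq_comm]
end

section
/- Let r ≥ 0 and k ≥ 1, let R = ℤ[ℤ^r × ℤ/kℤ] be the integral group algebra, u ∈ R the canonical invertible element corresponding to the group element (0, 1̄), and p = (Φ_k(u)) the minimal prime ideal generated by the k-th cyclotomic polynomial evaluated at u. Then the localization R_p of R at the prime ideal p is a field, isomorphic to the field ℚ(ζ_k)(x₁, …, x_r) of rational functions in r variables over the k-th cyclotomic field, i.e. to the fraction field of the polynomial ring in r variables over ℚ(ζ_k). -/
/-!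
Currying identifies `ℤ[ℤ^r × ℤ/k]` with Laurent polynomials over `ℤ[ℤ/k]`. Sending the generator
`u` of `ℤ/k` to a primitive root `ζ` and the generators of `ℤ^r` to the variables gives a map `φ`
to `ℚ(ζ)(x₁, …, xᵣ)`. Its kernel is `(Φₖ(u))`: the kernel of `ℤ[ℤ/k] → ℚ(ζ)` is generated by
`Φₖ(u)` because `Φₖ` is the minimal polynomial of `ζ` over `ℤ`, and Laurent polynomials embed into
rational functions. Its image generates the target field. Finally `Φₖ(u) · g(u) = uᵏ - 1 = 0` for
`g = ∏_{d ∣ k, d < k} Φ_d`, and `g(ζ) ≠ 0`, so the prime `p = ker φ` dies in `R_p`; hence `R_p` is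
the fraction field of `R ⧸ p`, which `φ` identifies with the rational function field.
-/

open Polynomial

theorem cyclotomic_mul_prod_properDivisors {k : ℕ} (hk : 0 < k) (R : Type*) [CommRing R] :
    cyclotomic k R * ∏ d ∈ k.properDivisors, cyclotomic d R = X ^ k - 1 := by
  rw [← prod_cyclotomic_eq_X_pow_sub_one hk, ← Nat.cons_self_properDivisors hk.ne',
    Finset.prod_cons]

theorem IsPrimitiveRoot.aeval_cyclotomic_eq_zero {K : Type*} [CommRing K] [IsDomain K] {k : ℕ}
    [NeZero k] {ζ : K} (hζ : IsPrimitiveRoot ζ k) : aeval ζ (cyclotomic k ℤ) = 0 := by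
  rw [aeval_def, eval₂_eq_eval_map, map_cyclotomic]
  exact hζ.isRoot_cyclotomic (NeZero.pos k)

theorem IsPrimitiveRoot.aeval_prod_cyclotomic_properDivisors_ne_zero {K : Type*} [CommRing K]
    [IsDomain K] [CharZero K] {k : ℕ} {ζ : K} (hζ : IsPrimitiveRoot ζ k) :
    aeval ζ (∏ d ∈ k.properDivisors, cyclotomic d ℤ) ≠ 0 := by
  rw [map_prod, Finset.prod_ne_zero_iff]
  intro d hd hroot
  have hζd : IsPrimitiveRoot ζ d := by
    rw [← isRoot_cyclotomic_iff_charZero (Nat.pos_of_mem_properDivisors hd),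
      ← map_cyclotomic d (algebraMap ℤ K), IsRoot, eval_map_algebraMap]
    exact hroot
  exact (Nat.mem_properDivisors.1 hd).2.ne (hζd.unique hζ)

theorem IsCyclotomicExtension.subfield_eq_top {K : Type*} [Field K] [Algebra ℚ K] {k : ℕ}
    [NeZero k] [IsCyclotomicExtension {k} ℚ K] {ζ : K} (hζ : IsPrimitiveRoot ζ k)
    (S : Subfield K) (hS : ζ ∈ S) : S = ⊤ := by
  let S' := S.toIntermediateField (K := ℚ) fun q ↦ by
    rw [eq_ratCast]
    exact SubfieldClass.ratCast_mem S q
  have hS' : (⊤ : Subalgebra ℚ K) ≤ S'.toSubalgebra := by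
    rw [← IsCyclotomicExtension.adjoin_primitive_root_eq_top hζ]
    exact Algebra.adjoin_le (Set.singleton_subset_iff.2 hS)
  exact eq_top_iff.2 fun x _ ↦ hS' trivial

theorem nonempty_localization_atPrime_ringEquiv_of_ker_eq {R L : Type*} [CommRing R] [Field L]
    (φ : R →+* L) (p : Ideal R) [p.IsPrime] (hker : RingHom.ker φ = p)
    (hann : ∀ x ∈ p, ∃ s ∉ p, s * x = 0) (hgen : Subfield.closure (Set.range φ) = ⊤) :
    Nonempty (Localization.AtPrime p ≃+* L) := by
  let := φ.toAlgebra
  have hloc : IsLocalization.AtPrime L p := by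
    subst hker
    refine (isLocalization_iff _ _).2
      ⟨fun s ↦ isUnit_iff_ne_zero.2 s.2, fun z ↦ ?_, fun {a b} h ↦ ?_⟩
    · obtain ⟨x, hx, y, hy, rfl⟩ := Subfield.mem_closure_iff.1 (hgen ▸ Subfield.mem_top z)
      rw [← RingHom.coe_range, Subring.closure_eq] at hx hy
      obtain ⟨a, rfl⟩ := hx
      obtain ⟨b, rfl⟩ := hy
      by_cases hb : φ b = 0
      · exact ⟨(0, 1), by simp [hb]⟩
      · exact ⟨(a, ⟨b, hb⟩), div_mul_cancel₀ _ hb⟩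
    · obtain ⟨s, hs, hsab⟩ := hann (a - b) (by rw [RingHom.mem_ker, map_sub, sub_eq_zero]; exact h)
      exact ⟨⟨s, hs⟩, by linear_combination hsab⟩
  exact ⟨(IsLocalization.algEquiv p.primeCompl (Localization.AtPrime p) L).toRingEquiv⟩

theorem AddMonoidAlgebra.ker_mapRingHom_s5 {A B G : Type*} [CommRing A] [CommRing B] [AddMonoid G]
    (f : A →+* B) :
    RingHom.ker (AddMonoidAlgebra.mapRingHom G f) =
      (RingHom.ker f).map (algebraMap A (AddMonoidAlgebra A G)) := by
  refine le_antisymm (fun x hx ↦ ?_) (Ideal.map_le_iff_le_comap.2 fun c hc ↦ ?_)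
  · rw [← AddMonoidAlgebra.sum_coeff_single x]
    refine Ideal.sum_mem _ fun g _ ↦ ?_
    have hg : x.coeff g ∈ RingHom.ker f := by simpa using congr(($hx).coeff g)
    have hsingle : AddMonoidAlgebra.single g (x.coeff g) =
        AddMonoidAlgebra.single g 1 * algebraMap A (AddMonoidAlgebra A G) (x.coeff g) := by
      change _ = AddMonoidAlgebra.single g 1 * AddMonoidAlgebra.single 0 _
      rw [AddMonoidAlgebra.single_mul_single, add_zero, one_mul, Algebra.algebraMap_self,
        RingHom.id_apply]
    rw [hsingle]
    exact Ideal.mul_mem_left _ _ (Ideal.mem_map_of_mem _ hg)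
  · change AddMonoidAlgebra.mapRingHom G f (AddMonoidAlgebra.single 0 c) = 0
    rw [AddMonoidAlgebra.mapRingHom_single, RingHom.mem_ker.1 hc, AddMonoidAlgebra.single_zero]

section LaurentPolynomials

variable {σ K : Type*} [CommRing K]

variable (σ K) in
noncomputable def laurentToFractionRing [IsDomain K] :
    AddMonoidAlgebra K (σ →₀ ℤ) →ₐ[K] FractionRing (MvPolynomial σ K) :=
  AddMonoidAlgebra.lift K _ _ <| (Units.coeHom _).comp <| AddMonoidHom.toMultiplicativeLeft <|
    Finsupp.liftAddHom fun i ↦ zmultiplesHom _ <| Additive.ofMul <|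
      Units.mk0 (algebraMap _ _ (MvPolynomial.X i : MvPolynomial σ K))
        ((map_ne_zero_iff _ (IsFractionRing.injective _ _)).2 (MvPolynomial.X_ne_zero i))

noncomputable abbrev natExponents : (σ →₀ ℕ) →+ (σ →₀ ℤ) :=
  Finsupp.mapRange.addMonoidHom (Nat.castAddMonoidHom ℤ)

theorem laurentToFractionRing_single_single_one [IsDomain K] (i : σ) :
    laurentToFractionRing σ K (AddMonoidAlgebra.single (Finsupp.single i 1) 1) =
      algebraMap _ _ (MvPolynomial.X i : MvPolynomial σ K) := by
  simp [laurentToFractionRing]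

theorem laurentToFractionRing_comp_mapDomainAlgHom [IsDomain K] :
    (laurentToFractionRing σ K).comp (AddMonoidAlgebra.mapDomainAlgHom K K natExponents) =
      IsScalarTower.toAlgHom K (MvPolynomial σ K) (FractionRing (MvPolynomial σ K)) := by
  refine MvPolynomial.algHom_ext fun i ↦ ?_
  rw [AlgHom.comp_apply, IsScalarTower.coe_toAlgHom', ← laurentToFractionRing_single_single_one]
  congr 1
  exact AddMonoidAlgebra.mapDomain_single.trans (by simp)

theorem mapDomainAlgHom_natExponents_monomial (m : σ →₀ ℕ) (c : K) :
    AddMonoidAlgebra.mapDomainAlgHom K K natExponents (MvPolynomial.monomial m c) =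
      AddMonoidAlgebra.single (natExponents m) c :=
  AddMonoidAlgebra.mapDomain_single

theorem exists_single_mul_eq_mapDomainAlgHom (f : AddMonoidAlgebra K (σ →₀ ℤ)) :
    ∃ (m : σ →₀ ℕ) (g : MvPolynomial σ K), AddMonoidAlgebra.single (natExponents m) 1 * f =
      AddMonoidAlgebra.mapDomainAlgHom K K natExponents g := by
  induction f using AddMonoidAlgebra.induction_linear with
  | zero => exact ⟨0, 0, by simp⟩
  | add f₁ f₂ h₁ h₂ =>
    obtain ⟨m₁, g₁, h₁⟩ := h₁
    obtain ⟨m₂, g₂, h₂⟩ := h₂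
    refine ⟨m₁ + m₂, MvPolynomial.monomial m₂ 1 * g₁ + MvPolynomial.monomial m₁ 1 * g₂, ?_⟩
    have hsplit : AddMonoidAlgebra.single (natExponents m₁ + natExponents m₂) (1 : K) =
        AddMonoidAlgebra.single (natExponents m₁) 1 *
          AddMonoidAlgebra.single (natExponents m₂) 1 := by
      rw [AddMonoidAlgebra.single_mul_single, one_mul]
    simp only [map_add, map_mul, mapDomainAlgHom_natExponents_monomial, ← h₁, ← h₂, hsplit]
    ring
  | single n c =>
    refine ⟨n.mapRange (fun t ↦ (-t).toNat) (by simp),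
      MvPolynomial.monomial (n.mapRange Int.toNat (by simp)) c, ?_⟩
    rw [mapDomainAlgHom_natExponents_monomial, AddMonoidAlgebra.single_mul_single, one_mul]
    congr 1
    ext i
    simp
    omega

theorem laurentToFractionRing_injective [IsDomain K] :
    Function.Injective (laurentToFractionRing σ K) := by
  rw [injective_iff_map_eq_zero]
  intro f hf
  obtain ⟨m, g, hg⟩ := exists_single_mul_eq_mapDomainAlgHom f
  have hg0 : g = 0 := by
    apply IsFractionRing.injective (MvPolynomial σ K) (FractionRing (MvPolynomial σ K))
    have := congr(laurentToFractionRing σ K $hg)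
    rw [map_mul, hf, mul_zero, ← AlgHom.comp_apply,
      laurentToFractionRing_comp_mapDomainAlgHom] at this
    simpa using this.symm
  have hunit : IsUnit (AddMonoidAlgebra.single (natExponents m) (1 : K)) :=
    IsUnit.of_mul_eq_one (AddMonoidAlgebra.single (-natExponents m) 1) (by
      rw [AddMonoidAlgebra.single_mul_single, add_neg_cancel, one_mul]
      rfl)
  rwa [hg0, map_zero, hunit.mul_right_eq_zero] at hg

end LaurentPolynomials

section CyclicGroupAlgebra

variable {K : Type*} [CommRing K] {k : ℕ} [NeZero k] {ζ : K}

def powZModHom (hζ : ζ ^ k = 1) : Multiplicative (ZMod k) →* K where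
  toFun j := ζ ^ (Multiplicative.toAdd j).val
  map_one' := by simp
  map_mul' a b := by
    rw [toAdd_mul, ZMod.val_add, ← pow_add]
    exact (pow_eq_pow_mod _ hζ).symm

noncomputable def zmodEval (hζ : ζ ^ k = 1) : AddMonoidAlgebra ℤ (ZMod k) →ₐ[ℤ] K :=
  AddMonoidAlgebra.lift ℤ _ _ (powZModHom hζ)

theorem zmodEval_single_one (hζ : ζ ^ k = 1) :
    zmodEval hζ (AddMonoidAlgebra.single 1 1) = ζ := by
  rw [zmodEval, AddMonoidAlgebra.lift_single, one_smul]
  change ζ ^ (1 : ZMod k).val = ζ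
  rw [ZMod.val_one_eq_one_mod, ← pow_eq_pow_mod 1 hζ, pow_one]

theorem aeval_single_one_surjective :
    Function.Surjective (aeval (R := ℤ) (AddMonoidAlgebra.single (1 : ZMod k) (1 : ℤ))) := by
  intro a
  induction a using AddMonoidAlgebra.induction_linear with
  | zero => exact ⟨0, map_zero _⟩
  | add a b ha hb =>
    obtain ⟨p, rfl⟩ := ha
    obtain ⟨q, rfl⟩ := hb
    exact ⟨p + q, map_add _ _ _⟩
  | single j c =>
    refine ⟨C c * X ^ j.val, ?_⟩
    rw [map_mul, aeval_C, map_pow, aeval_X, AddMonoidAlgebra.single_pow, one_pow,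
      nsmul_one, ZMod.natCast_zmod_val]
    change AddMonoidAlgebra.single 0 c * _ = _
    rw [AddMonoidAlgebra.single_mul_single, zero_add, mul_one]

end CyclicGroupAlgebra

theorem ker_zmodEval {K : Type*} [Field K] [CharZero K] {k : ℕ} [NeZero k] {ζ : K}
    (hζ : IsPrimitiveRoot ζ k) :
    RingHom.ker (zmodEval hζ.pow_eq_one) =
      Ideal.span {aeval (AddMonoidAlgebra.single (1 : ZMod k) (1 : ℤ)) (cyclotomic k ℤ)} := by
  have hu := zmodEval_single_one hζ.pow_eq_one
  refine le_antisymm (fun a ha ↦ ?_) ?_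
  · obtain ⟨q, rfl⟩ := aeval_single_one_surjective a
    rw [RingHom.mem_ker, ← aeval_algHom_apply, hu] at ha
    have hdvd : cyclotomic k ℤ ∣ q := by
      rw [cyclotomic_eq_minpoly hζ (NeZero.pos k)]
      exact minpoly.isIntegrallyClosed_dvd (hζ.isIntegral (NeZero.pos k)) ha
    exact Ideal.mem_span_singleton.2 (map_dvd _ hdvd)
  · rw [Ideal.span_singleton_le_iff_mem, RingHom.mem_ker, ← aeval_algHom_apply, hu]
    exact hζ.aeval_cyclotomic_eq_zero

section TorusTimesCyclic

variable {σ : Type*} {K : Type*} [Field K] {k : ℕ} {ζ : K}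

theorem curryAlgEquiv_aeval_single_zero_one (q : ℤ[X]) :
    AddMonoidAlgebra.curryAlgEquiv ℤ
        (aeval (AddMonoidAlgebra.single ((0 : σ →₀ ℤ), (1 : ZMod k)) (1 : ℤ)) q) =
      algebraMap _ (AddMonoidAlgebra (AddMonoidAlgebra ℤ (ZMod k)) (σ →₀ ℤ))
        (aeval (AddMonoidAlgebra.single (1 : ZMod k) (1 : ℤ)) q) := by
  rw [← aeval_algHom_apply, AddMonoidAlgebra.curryAlgEquiv_single, ← aeval_algebraMap_apply]
  rfl

theorem single_zero_one_pow_eq_one :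
    AddMonoidAlgebra.single ((0 : σ →₀ ℤ), (1 : ZMod k)) (1 : ℤ) ^ k = 1 := by
  rw [AddMonoidAlgebra.single_pow, one_pow, Prod.smul_mk, smul_zero, nsmul_one,
    ZMod.natCast_self]
  rfl

variable [NeZero k]

variable (σ) in
noncomputable def groupAlgebraToFractionRing (hζ : ζ ^ k = 1) :
    AddMonoidAlgebra ℤ ((σ →₀ ℤ) × ZMod k) →+* FractionRing (MvPolynomial σ K) :=
  (laurentToFractionRing σ K : AddMonoidAlgebra K (σ →₀ ℤ) →+* _).comp <|
    (AddMonoidAlgebra.mapRingHom _ (zmodEval hζ : AddMonoidAlgebra ℤ (ZMod k) →+* K)).comp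
      (AddMonoidAlgebra.curryAlgEquiv ℤ).toRingEquiv.toRingHom

theorem groupAlgebraToFractionRing_aeval_single_zero_one (hζ : ζ ^ k = 1) (q : ℤ[X]) :
    groupAlgebraToFractionRing σ hζ
        (aeval (AddMonoidAlgebra.single ((0 : σ →₀ ℤ), (1 : ZMod k)) (1 : ℤ)) q) =
      algebraMap K _ (aeval ζ q) := by
  rw [groupAlgebraToFractionRing, RingHom.comp_apply, RingHom.comp_apply,
    RingEquiv.toRingHom_eq_coe, RingEquiv.coe_toRingHom, AlgEquiv.coe_ringEquiv,
    curryAlgEquiv_aeval_single_zero_one, ← RingHom.comp_apply (AddMonoidAlgebra.mapRingHom _ _),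
    AddMonoidAlgebra.mapRingHom_comp_algebraMap, RingHom.comp_apply, AlgHom.coe_toRingHom,
    AlgHom.coe_toRingHom, AlgHom.commutes, ← aeval_algHom_apply, zmodEval_single_one]

theorem groupAlgebraToFractionRing_single_zero_one (hζ : ζ ^ k = 1) :
    groupAlgebraToFractionRing σ hζ (AddMonoidAlgebra.single (0, 1) (1 : ℤ)) =
      algebraMap K _ ζ := by
  simpa using groupAlgebraToFractionRing_aeval_single_zero_one (σ := σ) hζ X

theorem groupAlgebraToFractionRing_single_single_zero (hζ : ζ ^ k = 1) (i : σ) :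
    groupAlgebraToFractionRing σ hζ (AddMonoidAlgebra.single (Finsupp.single i 1, 0) (1 : ℤ)) =
      algebraMap _ _ (MvPolynomial.X i : MvPolynomial σ K) := by
  simp [groupAlgebraToFractionRing, ← AddMonoidAlgebra.one_def,
    laurentToFractionRing_single_single_one]

theorem ker_groupAlgebraToFractionRing [CharZero K] (hζ : IsPrimitiveRoot ζ k) :
    RingHom.ker (groupAlgebraToFractionRing σ hζ.pow_eq_one) =
      Ideal.span {aeval (AddMonoidAlgebra.single ((0 : σ →₀ ℤ), (1 : ZMod k)) (1 : ℤ))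
        (cyclotomic k ℤ)} := by
  calc RingHom.ker (groupAlgebraToFractionRing σ hζ.pow_eq_one)
      = RingHom.ker ((AddMonoidAlgebra.mapRingHom (σ →₀ ℤ)
            (zmodEval hζ.pow_eq_one : AddMonoidAlgebra ℤ (ZMod k) →+* K)).comp
          (AddMonoidAlgebra.curryAlgEquiv ℤ).toRingEquiv.toRingHom) :=
        RingHom.ker_comp_of_injective _ laurentToFractionRing_injective
    _ = _ := by
      rw [← RingHom.comap_ker, AddMonoidAlgebra.ker_mapRingHom_s5, ← AlgHom.ker_coe,
        ker_zmodEval hζ, Ideal.map_span, Set.image_singleton,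
        ← curryAlgEquiv_aeval_single_zero_one, ← Set.image_singleton, ← Ideal.map_span]
      exact Ideal.comap_map_of_bijective _ (AddMonoidAlgebra.curryAlgEquiv ℤ).bijective

theorem exists_mul_eq_zero_of_mem_ker_groupAlgebraToFractionRing [CharZero K]
    (hζ : IsPrimitiveRoot ζ k) (x : AddMonoidAlgebra ℤ ((σ →₀ ℤ) × ZMod k))
    (hx : x ∈ RingHom.ker (groupAlgebraToFractionRing σ hζ.pow_eq_one)) :
    ∃ s ∉ RingHom.ker (groupAlgebraToFractionRing σ hζ.pow_eq_one), s * x = 0 := by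
  rw [ker_groupAlgebraToFractionRing hζ, Ideal.mem_span_singleton'] at hx
  obtain ⟨c, rfl⟩ := hx
  set u := AddMonoidAlgebra.single ((0 : σ →₀ ℤ), (1 : ZMod k)) (1 : ℤ)
  refine ⟨aeval u (∏ d ∈ k.properDivisors, cyclotomic d ℤ), ?_, ?_⟩
  · rw [RingHom.mem_ker, groupAlgebraToFractionRing_aeval_single_zero_one,
      map_eq_zero_iff _ (algebraMap K _).injective]
    exact hζ.aeval_prod_cyclotomic_properDivisors_ne_zero
  · calc aeval u (∏ d ∈ k.properDivisors, cyclotomic d ℤ) * (c * aeval u (cyclotomic k ℤ))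
        = c * aeval u (cyclotomic k ℤ * ∏ d ∈ k.properDivisors, cyclotomic d ℤ) := by
          rw [map_mul]
          ring
      _ = 0 := by
          rw [cyclotomic_mul_prod_properDivisors (NeZero.pos k), map_sub, map_pow, aeval_X,
            map_one, single_zero_one_pow_eq_one, sub_self, mul_zero]

theorem closure_range_groupAlgebraToFractionRing [Algebra ℚ K] [IsCyclotomicExtension {k} ℚ K]
    (hζ : IsPrimitiveRoot ζ k) :
    Subfield.closure (Set.range (groupAlgebraToFractionRing σ hζ.pow_eq_one)) = ⊤ := by
  set F := Subfield.closure (Set.range (groupAlgebraToFractionRing σ hζ.pow_eq_one))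
  have hK : F.comap (algebraMap K _) = ⊤ :=
    IsCyclotomicExtension.subfield_eq_top hζ _
      (Subfield.subset_closure ⟨_, groupAlgebraToFractionRing_single_zero_one _⟩)
  rw [eq_top_iff, ← IsFractionRing.closure_range_algebraMap (MvPolynomial σ K),
    Subfield.closure_le]
  rintro _ ⟨P, rfl⟩
  induction P using MvPolynomial.induction_on with
  | C c =>
    rw [← MvPolynomial.algebraMap_eq, ← IsScalarTower.algebraMap_apply]
    exact Subfield.mem_comap.1 (hK ▸ Subfield.mem_top c)
  | add P Q hP hQ =>
    rw [map_add]
    exact add_mem hP hQ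
  | mul_X P i hP =>
    rw [map_mul]
    exact mul_mem hP
      (Subfield.subset_closure ⟨_, groupAlgebraToFractionRing_single_single_zero _ i⟩)

end TorusTimesCyclic

/-- Let `R = ℤ[ℤ^r × ℤ/kℤ]` be the integral group algebra, `u ∈ R` the
canonical invertible element corresponding to `(0, 1̄)`, and
`p = (Φ_k(u))` the minimal prime ideal generated by the `k`-th cyclotomic
polynomial evaluated at `u`.  Then the localization `R_p` of `R` at the prime
ideal `p` is a field, isomorphic to the field of rational functions in `r`
variables over the `k`-th cyclotomic field, i.e. to the fraction field of the
polynomial ring in `r` variables over `ℚ(ζ_k)`. -/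
theorem localization_groupAlgebra_at_cyclotomic_prime_isom
    (r k : ℕ) (hk : 0 < k) :
    let R := AddMonoidAlgebra ℤ ((Fin r →₀ ℤ) × ZMod k)
    let u : R := AddMonoidAlgebra.single ((0 : Fin r →₀ ℤ), (1 : ZMod k)) (1 : ℤ)
    let p : Ideal R := Ideal.span {Polynomial.aeval u (Polynomial.cyclotomic k ℤ)}
    ∃ hp : p.IsPrime,
      letI := hp
      IsField (Localization.AtPrime p) ∧
      Nonempty (Localization.AtPrime p ≃+*
        FractionRing (MvPolynomial (Fin r) (CyclotomicField (⟨k, hk⟩ : ℕ+) ℚ))) := by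
  intro R u p
  have : NeZero k := ⟨hk.ne'⟩
  have : IsCyclotomicExtension {k} ℚ (CyclotomicField k ℚ) :=
    have : NeZero (k : ℚ) := NeZero.charZero
    CyclotomicField.isCyclotomicExtension k ℚ
  have hζ := IsCyclotomicExtension.zeta_spec k ℚ (CyclotomicField k ℚ)
  have hker : RingHom.ker (groupAlgebraToFractionRing (Fin r) hζ.pow_eq_one) = p :=
    ker_groupAlgebraToFractionRing hζ
  have hp : p.IsPrime := hker ▸ RingHom.ker_isPrime _
  obtain ⟨e⟩ := nonempty_localization_atPrime_ringEquiv_of_ker_eq _ p hker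
    (hker ▸ exists_mul_eq_zero_of_mem_ker_groupAlgebraToFractionRing hζ)
    (closure_range_groupAlgebraToFractionRing hζ)
  exact ⟨hp, e.toMulEquiv.isField (Field.toIsField _), ⟨e⟩⟩
end

section
/- Additivity of the trace over direct sums: let C be a preadditive symmetric monoidal category with binary biproducts in which the tensor product is additive in each variable. Let A and B be objects equipped with duality data, let f : A → A and g : B → B be endomorphisms, and suppose the biproduct A ⊕ B is equipped with some duality data. Then the trace of the endomorphism f ⊕ g : A ⊕ B → A ⊕ B equals tr(f) + tr(g) as endomorphisms of the tensor unit 𝟙. -/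
/-!
Write `f ⊕ g = fst ≫ (f ≫ inl) + snd ≫ (g ≫ inr)`. The trace is additive, and it is cyclic,
`tr (u ≫ v) = tr (v ≫ u)`, even when the two sides are computed with duality data on different
objects: the mate of `v` intertwines the two units and the two counits. Hence
`tr (fst ≫ f ≫ inl) = tr (f ≫ inl ≫ fst) = tr f`, and likewise for `g`.
-/

open CategoryTheory MonoidalCategory CategoryTheory.Limits

/-- The trace (Lefschetz index) of an endomorphism `f : A ⟶ A` in a symmetric
monoidal category, computed from the duality data `p` (an exact pairing of `A`
with a chosen dual `A'`): the composite `ε ∘ (id_{A'} ⊗ f) ∘ β_{A,A'} ∘ η`. -/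
noncomputable def traceWith {C : Type*} [Category C] [MonoidalCategory C]
    [SymmetricCategory C] (A A' : C) (p : ExactPairing A A') (f : A ⟶ A) :
    𝟙_ C ⟶ 𝟙_ C :=
  letI := p
  ExactPairing.coevaluation A A' ≫ (β_ A A').hom ≫ (A' ◁ f) ≫
    ExactPairing.evaluation A A'

section

variable {C : Type*} [Category C] [MonoidalCategory C] [SymmetricCategory C]

theorem traceWith_add [Preadditive C] [MonoidalPreadditive C]
    (A A' : C) (p : ExactPairing A A') (f g : A ⟶ A) :
    traceWith A A' p (f + g) = traceWith A A' p f + traceWith A A' p g := by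
  simp [traceWith]

theorem traceWith_comp_comm (X X' Z Z' : C) (pX : ExactPairing X X') (pZ : ExactPairing Z Z')
    (u : X ⟶ Z) (v : Z ⟶ X) :
    traceWith X X' pX (u ≫ v) = traceWith Z Z' pZ (v ≫ u) := by
  let _ := pX
  let _ := pZ
  obtain ⟨m, hm_ev, hm_coev⟩ : ∃ m : X' ⟶ Z',
      m ▷ Z ≫ ε_ Z Z' = X' ◁ v ≫ ε_ X X' ∧ η_ X X' ≫ X ◁ m = η_ Z Z' ≫ v ▷ Z' :=
    let _ : HasRightDual X := ⟨X'⟩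
    let _ : HasRightDual Z := ⟨Z'⟩
    ⟨vᘁ, rightAdjointMate_comp_evaluation v, coevaluation_comp_rightAdjointMate v⟩
  dsimp only [traceWith]
  calc η_ X X' ≫ (β_ X X').hom ≫ X' ◁ (u ≫ v) ≫ ε_ X X'
      = η_ X X' ≫ (β_ X X').hom ≫ X' ◁ u ≫ m ▷ Z ≫ ε_ Z Z' := by
        rw [whiskerLeft_comp_assoc, hm_ev]
    _ = (η_ X X' ≫ X ◁ m) ≫ (β_ X Z').hom ≫ Z' ◁ u ≫ ε_ Z Z' := by
        rw [whisker_exchange_assoc, ← BraidedCategory.braiding_naturality_right_assoc,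
          Category.assoc]
    _ = η_ Z Z' ≫ (β_ Z Z').hom ≫ Z' ◁ (v ≫ u) ≫ ε_ Z Z' := by
        rw [hm_coev, Category.assoc, BraidedCategory.braiding_naturality_left_assoc,
          whiskerLeft_comp_assoc]

end

/-- Additivity of the trace over direct sums: in a preadditive symmetric
monoidal category with binary biproducts in which the tensor product is
additive in each variable, if `A` and `B` are equipped with duality data, and
the biproduct `A ⊞ B` is equipped with some duality data, then the trace of
`f ⊕ g : A ⊞ B ⟶ A ⊞ B` equals `tr f + tr g` as endomorphisms of the tensor
unit. -/
theorem traceWith_biprod_map_add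
    {C : Type*} [Category C] [MonoidalCategory C] [SymmetricCategory C]
    [Preadditive C] [MonoidalPreadditive C] [HasBinaryBiproducts C]
    (A A' B B' S : C) (pA : ExactPairing A A') (pB : ExactPairing B B')
    (pS : ExactPairing (A ⊞ B) S) (f : A ⟶ A) (g : B ⟶ B) :
    traceWith (A ⊞ B) S pS (biprod.map f g) =
      traceWith A A' pA f + traceWith B B' pB g := by
  rw [biprod.map_eq, traceWith_add,
    traceWith_comp_comm _ _ A A' pS pA, traceWith_comp_comm _ _ B B' pS pB]
  simp
end
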